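/- Let κ be a regular cardinal and μ a (κ,κ⁺)-cardinal. If X and Y are elements of μ of the same rank, then the unique order-preserving bijection f_{XY} : Y → X restricts to the identity on X ∩ Y. -/

import Mathlib

open Set Cardinal Ordinal

noncomputable section

/-- Lower a (small) ordinal of `Ordinal.{1}` to `Ordinal.{0}` (the inverse of `Ordinal.lift`
on its range). -/
noncomputable def olower (o : Ordinal.{1}) : Ordinal.{0} :=
  sInf {a : Ordinal.{0} | Ordinal.lift.{1} a = o}

/-- The order type of a set of ordinals. -/
noncomputable def otp (A : Set Ordinal.{0}) : Ordinal.{0} :=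
  olower (Ordinal.type (Subrel ((· < ·) : Ordinal → Ordinal → Prop) (· ∈ A)))

/-- The canonical order-preserving transfer map from a set of ordinals `X` to a set of
ordinals `Y` of the same order type: an element `a ∈ X` is sent to the unique element of `Y`
occupying the same position. -/
noncomputable def omap (X Y : Set Ordinal) (a : Ordinal) : Ordinal :=
  sInf {b | b ∈ Y ∧ otp (Y ∩ Set.Iio b) = otp (X ∩ Set.Iio a)}

/-- `IsStar X₁ X₂ X` says `X = X₁ * X₂`: `X₁` and `X₂` have the same order type,
`X = X₁ ∪ X₂`, and `X₁ ∩ X₂ < X₁ \ X₂ < X₂ \ X₁` elementwise. -/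
def IsStar (X₁ X₂ X : Set Ordinal) : Prop :=
  otp X₁ = otp X₂ ∧ X = X₁ ∪ X₂ ∧
  (∀ a ∈ X₁ ∩ X₂, ∀ b ∈ X₁ \ X₂, a < b) ∧
  (∀ b ∈ X₁ \ X₂, ∀ c ∈ X₂ \ X₁, b < c)

/-- The rank of `a` under a well-founded relation (Mathlib's removed `WellFounded.rank`). -/
noncomputable def WellFounded.rank {α : Type*} {r : α → α → Prop} (hwf : WellFounded r) (a : α) :
    Ordinal := (hwf.apply a).rank

set_option linter.deprecated false in
/-- A `(κ,κ⁺)`-cardinal (a neat simplified `(κ,1)`-morass presented as a family of sets):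
a family `μ ⊆ ℘_κ(κ⁺)` which is well-founded under strict inclusion, locally small,
homogeneous, directed, locally almost directed, covers `κ⁺` and is neat. -/
structure TwoCardinal (κ : Cardinal.{0}) where
  mu : Set (Set Ordinal)
  mem_sub : ∀ X ∈ mu, X ⊆ Set.Iio (Order.succ κ).ord
  mem_small : ∀ X ∈ mu, (otp X).card < κ
  wf : WellFounded fun X Y : mu => (X : Set Ordinal) ⊂ (Y : Set Ordinal)
  locSmall : ∀ X : mu,
    #{Z : mu // (Z : Set Ordinal) ⊂ (X : Set Ordinal)} < Cardinal.lift.{1} κ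
  homog : ∀ X Y : mu, wf.rank X = wf.rank Y →
    otp (X : Set Ordinal) = otp (Y : Set Ordinal) ∧
    {Z | Z ∈ mu ∧ Z ⊂ (Y : Set Ordinal)} =
      (fun Z => omap (X : Set Ordinal) (Y : Set Ordinal) '' Z) ''
        {Z | Z ∈ mu ∧ Z ⊂ (X : Set Ordinal)}
  directed : ∀ X ∈ mu, ∀ Y ∈ mu, ∃ Z ∈ mu, X ⊆ Z ∧ Y ⊆ Z
  locAlmostDirected : ∀ X : mu,
    (∀ Z₁ ∈ mu, ∀ Z₂ ∈ mu, Z₁ ⊂ (X : Set Ordinal) → Z₂ ⊂ (X : Set Ordinal) →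
      ∃ Z ∈ mu, Z ⊂ (X : Set Ordinal) ∧ Z₁ ⊆ Z ∧ Z₂ ⊆ Z) ∨
    (∃ X₁ X₂ : mu, wf.rank X₁ = wf.rank X₂ ∧
      IsStar (X₁ : Set Ordinal) (X₂ : Set Ordinal) (X : Set Ordinal) ∧
      {Z | Z ∈ mu ∧ Z ⊂ (X : Set Ordinal)} =
        {Z | Z ∈ mu ∧ Z ⊂ (X₁ : Set Ordinal)} ∪ {Z | Z ∈ mu ∧ Z ⊂ (X₂ : Set Ordinal)} ∪
          {(X₁ : Set Ordinal), (X₂ : Set Ordinal)})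
  covers : ⋃₀ mu = Set.Iio (Order.succ κ).ord
  neat : ∀ X : mu, wf.rank X ≠ 0 →
    (X : Set Ordinal) = ⋃₀ {Z | Z ∈ mu ∧ Z ⊂ (X : Set Ordinal)}

namespace TwoCardinal

variable {κ : Cardinal} (M : TwoCardinal κ)

set_option linter.deprecated false in
/-- The rank of an element of `μ` in the well-founded order `(μ, ⊂)`. -/
noncomputable def rank (X : M.mu) : Ordinal := olower (M.wf.rank X)

/-- The height of the well-founded order `(μ, ⊂)`. -/
noncomputable def ht : Ordinal := sSup (Set.range fun X : M.mu => M.rank X + 1)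

/-- The term `μ_ξ(α)` of the μ-sequence at `α`: equal to `X ∩ α` for any `X ∈ μ` of
rank `ξ` containing `α` (this is independent of the choice of `X`). -/
noncomputable def seq (α ξ : Ordinal) : Set Ordinal :=
  ⋃₀ {S | ∃ X : M.mu, M.rank X = ξ ∧ α ∈ (X : Set Ordinal) ∧
    S = (X : Set Ordinal) ∩ Set.Iio α}

/-- The μ-coloring `m(α,β) = min{rank X : α, β ∈ X ∈ μ}`. -/
noncomputable def mcol (a b : Ordinal) : Ordinal :=
  sInf {ξ | ∃ X : M.mu, M.rank X = ξ ∧ a ∈ (X : Set Ordinal) ∧ b ∈ (X : Set Ordinal)}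

end TwoCardinal

/-!
Choose `W ∈ μ` containing `X` and `Y` (directedness) and induct on `W` along `⊂`, with the
invariant that members `X, Y ⊆ W` of `μ` of equal rank have initial segments `X ∩ a`, `Y ∩ a` of
the same order type at every common point `a`; that is exactly `f_{XY}(a) = a`. If `W` is
directed below, both sets lie in a smaller member of `μ`. Otherwise `W = W₁ * W₂`, and the only
new case is `X ⊆ W₁`, `Y ⊆ W₂`. Then homogeneity moves `X` to a member `X' ⊆ W₂` of the same
rank via the collapse of `W₁` onto `W₂`, which fixes the common initial segment `W₁ ∩ W₂`
pointwise and hence preserves the order type of `X ∩ a`; the induction hypothesis for `W₂`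
compares `X'` with `Y`.
-/

/-- `otp` before lowering to `Ordinal.{0}`: unlike `otp`, it is meaningful for unbounded sets
too. -/
def ot (A : Set Ordinal.{0}) : Ordinal.{1} :=
  type (Subrel ((· < ·) : Ordinal → Ordinal → Prop) (· ∈ A))

theorem olower_lift (a : Ordinal.{0}) : olower (lift.{1} a) = a := by
  simp only [olower, Ordinal.lift_inj, ofPred_eq_eq_singleton, csInf_singleton]

theorem lt_univ_iff_mem_range_lift {o : Ordinal.{1}} :
    o < Ordinal.univ.{0, 1} ↔ o ∈ range Ordinal.lift.{1, 0} := by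
  rw [← liftPrincipalSeg_top.{0, 1}, ← liftPrincipalSeg_coe.{0, 1}]
  exact liftPrincipalSeg.mem_range_iff_rel.symm

theorem lift_otp {A : Set Ordinal.{0}} {o : Ordinal} (h : A ⊆ Iio o) :
    lift.{1} (otp A) = ot A := by
  have hle : ot A ≤ lift.{1} o := by
    calc ot A ≤ ot (Iio o) :=
          type_le_iff'.2 ⟨⟨⟨inclusion h, inclusion_injective h⟩, Iff.rfl⟩⟩
      _ = lift.{1} o := (type_subrel _ o).trans (typein_ordinal o)
  obtain ⟨a, ha⟩ := mem_range_lift_of_le hle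
  rw [otp, ← ot, ← ha, olower_lift]

theorem otp_eq_otp_iff {A B : Set Ordinal.{0}} {o o' : Ordinal} (hA : A ⊆ Iio o)
    (hB : B ⊆ Iio o') : otp A = otp B ↔ ot A = ot B := by
  rw [← lift_otp hA, ← lift_otp hB, Ordinal.lift_inj]

theorem ot_inter_Iio {X : Set Ordinal.{0}} {a : Ordinal} (ha : a ∈ X) :
    ot (X ∩ Iio a) = typein (Subrel (· < ·) (· ∈ X)) ⟨a, ha⟩ :=
  RelIso.ordinalType_congr
    ⟨(Equiv.subtypeSubtypeEquivSubtypeInter (· ∈ X) (· < a)).symm, Iff.rfl⟩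

theorem otp_inter_Iio_eq_iff {X Y : Set Ordinal.{0}} {a b : Ordinal} :
    otp (Y ∩ Iio b) = otp (X ∩ Iio a) ↔ ot (Y ∩ Iio b) = ot (X ∩ Iio a) :=
  otp_eq_otp_iff inter_subset_right inter_subset_right

theorem ot_image {A : Set Ordinal.{0}} {f : Ordinal → Ordinal} (hf : StrictMonoOn f A) :
    ot (f '' A) = ot A :=
  (hf.orderIso f A).symm.toRelIsoLT.ordinalType_congr

section omap

variable {X Y : Set Ordinal.{0}} {a : Ordinal}

theorem omap_eq_of_relIso
    (g : Subrel (· < ·) (· ∈ X) ≃r Subrel ((· < ·) : Ordinal → Ordinal → Prop) (· ∈ Y))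
    (ha : a ∈ X) : omap X Y a = g ⟨a, ha⟩ := by
  have hseg_iff : ∀ b (hb : b ∈ Y), ot (Y ∩ Iio b) = ot (X ∩ Iio a) ↔ ⟨b, hb⟩ = g ⟨a, ha⟩ := by
    intro b hb
    rw [ot_inter_Iio hb, ot_inter_Iio ha, ← typein_apply g.toInitialSeg, typein_inj]
    rfl
  have hS : {b | b ∈ Y ∧ otp (Y ∩ Iio b) = otp (X ∩ Iio a)} = {(g ⟨a, ha⟩ : Ordinal)} := by
    ext b
    simp only [mem_ofPred_eq, mem_singleton_iff, otp_inter_Iio_eq_iff]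
    constructor
    · rintro ⟨hb, h⟩
      exact congrArg Subtype.val ((hseg_iff b hb).1 h)
    · rintro rfl
      exact ⟨(g _).2, (hseg_iff _ (g _).2).2 rfl⟩
  rw [omap, hS, csInf_singleton]

theorem strictMonoOn_omap (h : ot X = ot Y) : StrictMonoOn (omap X Y) X := by
  obtain ⟨g⟩ := type_eq.1 h
  intro x hx y hy hxy
  rw [omap_eq_of_relIso g hx, omap_eq_of_relIso g hy]
  exact g.map_rel_iff.2 hxy

theorem omap_image (h : ot X = ot Y) : omap X Y '' X = Y := by
  obtain ⟨g⟩ := type_eq.1 h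
  ext b
  constructor
  · rintro ⟨x, hx, rfl⟩
    rw [omap_eq_of_relIso g hx]
    exact (g _).2
  · intro hb
    obtain ⟨⟨x, hx⟩, hgx⟩ := g.surjective ⟨b, hb⟩
    exact ⟨x, hx, by rw [omap_eq_of_relIso g hx, hgx]⟩

theorem omap_eq_self (h : ot X = ot Y) (haX : a ∈ X) (haY : a ∈ Y)
    (hseg : ot (X ∩ Iio a) = ot (Y ∩ Iio a)) : omap X Y a = a := by
  obtain ⟨g⟩ := type_eq.1 h
  rw [omap_eq_of_relIso g haX]
  have := typein_apply g.toInitialSeg ⟨a, haX⟩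
  rw [← ot_inter_Iio haX, hseg, ot_inter_Iio haY, typein_inj] at this
  exact congrArg Subtype.val this

end omap

theorem StrictMonoOn.image_inter_Iio_of_eq_self {α : Type*} [LinearOrder α] {f : α → α}
    {S X : Set α} {a : α} (hf : StrictMonoOn f S) (hX : X ⊆ S) (ha : a ∈ S) (hfa : f a = a) :
    f '' (X ∩ Iio a) = f '' X ∩ Iio a := by
  ext y
  constructor
  · rintro ⟨x, ⟨hx, hxa⟩, rfl⟩
    exact ⟨mem_image_of_mem f hx, hfa ▸ hf (hX hx) ha hxa⟩
  · rintro ⟨⟨x, hx, rfl⟩, hxa⟩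
    exact ⟨x, ⟨hx, (hf.lt_iff_lt (hX hx) ha).1 (hfa.symm ▸ hxa)⟩, rfl⟩

theorem IsStar.diff_nonempty {X₁ X₂ X : Set Ordinal} (hs : IsStar X₁ X₂ X) (h : X₂ ⊂ X) :
    (X₁ \ X₂).Nonempty := by
  rw [nonempty_iff_ne_empty, Ne, sdiff_eq_empty]
  intro h₁₂
  rw [hs.2.1, union_eq_self_of_subset_left h₁₂] at h
  exact h.ne rfl

theorem IsStar.inter_Iio_eq {X₁ X₂ X : Set Ordinal} (hs : IsStar X₁ X₂ X)
    (hne : (X₁ \ X₂).Nonempty) {x : Ordinal} (hx : x ∈ X₁ ∩ X₂) :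
    X₁ ∩ Iio x = X₂ ∩ Iio x := by
  obtain ⟨-, -, hlt₁, hlt₂⟩ := hs
  obtain ⟨b, hb⟩ := hne
  ext z
  refine and_congr_left fun hzx => ⟨fun hz₁ => ?_, fun hz₂ => ?_⟩
  · by_contra hz₂
    exact (hlt₁ x hx z ⟨hz₁, hz₂⟩).not_gt hzx
  · by_contra hz₁
    exact ((hlt₁ x hx b hb).trans (hlt₂ b hb z ⟨hz₂, hz₁⟩)).not_gt hzx

theorem WellFounded.rank_eq {α : Type*} {r : α → α → Prop} (hwf : WellFounded r) (a : α) :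
    hwf.rank a = ⨆ b : { b // r b a }, Order.succ (hwf.rank b) :=
  (hwf.apply a).rank_eq

theorem WellFounded.rank_lt_of_rel {α : Type*} {r : α → α → Prop} (hwf : WellFounded r)
    {a b : α} (h : r a b) : hwf.rank a < hwf.rank b :=
  Acc.rank_lt_of_rel _ h

namespace TwoCardinal

variable {κ : Cardinal} {M : TwoCardinal κ}

theorem wfRank_lt_univ (X : M.mu) : M.wf.rank X < Ordinal.univ.{0, 1} := by
  induction X using WellFounded.induction M.wf with
  | _ X IH =>
    rw [M.wf.rank_eq]
    refine iSup_lt_of_lt_cof ?_ fun Z => ?_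
    · rw [cof_univ]
      exact (M.locSmall X).trans (Cardinal.lift_lt_univ' κ)
    · obtain ⟨c, hc⟩ := lt_univ_iff_mem_range_lift.1 (IH Z.1 Z.2)
      rw [← hc, ← Ordinal.lift_succ, lt_univ_iff_mem_range_lift]
      exact mem_range_self _

theorem wfRank_eq_of_rank_eq {X Y : M.mu} (h : M.rank X = M.rank Y) :
    M.wf.rank X = M.wf.rank Y := by
  obtain ⟨c, hc⟩ := lt_univ_iff_mem_range_lift.1 (wfRank_lt_univ X)
  obtain ⟨d, hd⟩ := lt_univ_iff_mem_range_lift.1 (wfRank_lt_univ Y)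
  rw [rank, rank, ← hc, ← hd, olower_lift, olower_lift] at h
  rw [← hc, ← hd, h]

theorem ot_eq_of_wfRank_eq {X Y : M.mu} (h : M.wf.rank X = M.wf.rank Y) :
    ot (X : Set Ordinal) = ot Y :=
  (otp_eq_otp_iff (M.mem_sub _ X.2) (M.mem_sub _ Y.2)).1 (M.homog X Y h).1

theorem eq_of_subset_of_wfRank_eq {X Y : M.mu} (hXY : (X : Set Ordinal) ⊆ Y)
    (h : M.wf.rank X = M.wf.rank Y) : X = Y := by
  by_contra hne
  exact (M.wf.rank_lt_of_rel (hXY.ssubset_of_ne (Subtype.coe_ne_coe.2 hne))).ne h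

/-- The rank of `Z ⊂ W₁` only depends on the members of `μ` below `Z`, which all lie below `W₁`. -/
theorem exists_image_wfRank_eq {f : Ordinal → Ordinal} {W₁ W₂ : M.mu}
    (hf : InjOn f W₁)
    (hsub : {Z | Z ∈ M.mu ∧ Z ⊂ (W₂ : Set Ordinal)} =
      (f '' ·) '' {Z | Z ∈ M.mu ∧ Z ⊂ (W₁ : Set Ordinal)})
    (Z : M.mu) (hZ : (Z : Set Ordinal) ⊂ W₁) :
    ∃ Z' : M.mu, (Z' : Set Ordinal) = f '' Z ∧ M.wf.rank Z' = M.wf.rank Z := by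
  induction Z using WellFounded.induction M.wf with
  | _ Z IH =>
    have hZ' : f '' Z ∈ {Z | Z ∈ M.mu ∧ Z ⊂ (W₂ : Set Ordinal)} := hsub ▸ ⟨Z, ⟨Z.2, hZ⟩, rfl⟩
    refine ⟨⟨f '' Z, hZ'.1⟩, rfl, ?_⟩
    rw [M.wf.rank_eq, M.wf.rank_eq]
    apply le_antisymm
    · refine Ordinal.iSup_le fun ⟨B, hB⟩ => ?_
      have hBW₂ : B.1 ∈ {Z | Z ∈ M.mu ∧ Z ⊂ (W₂ : Set Ordinal)} := ⟨B.2, hB.trans hZ'.2⟩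
      rw [hsub] at hBW₂
      obtain ⟨C, ⟨hCmu, hCW₁⟩, hCB : f '' C = B⟩ := hBW₂
      have hCZ : C ⊂ Z := by
        rwa [← hf.image_ssubset_image_iff hCW₁.subset hZ.subset, hCB]
      obtain ⟨C', hC', hrank⟩ := IH ⟨C, hCmu⟩ hCZ hCW₁
      have hBC' : B = C' := Subtype.ext (hCB.symm.trans hC'.symm)
      show Order.succ (M.wf.rank B) ≤ _
      rw [hBC', hrank]
      exact Ordinal.le_iSup (fun C : {C // C.1 ⊂ Z.1} => Order.succ (M.wf.rank C.1))
        ⟨⟨C, hCmu⟩, hCZ⟩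
    · refine Ordinal.iSup_le fun ⟨B, hB⟩ => ?_
      obtain ⟨B', hB', hrank⟩ := IH B hB (hB.trans hZ)
      have hB'Z : B'.1 ⊂ f '' Z := by
        rw [hB']
        exact (hf.image_ssubset_image_iff (hB.subset.trans hZ.subset) hZ.subset).2 hB
      show Order.succ (M.wf.rank B) ≤ _
      rw [← hrank]
      exact Ordinal.le_iSup (fun C : {C : M.mu // C.1 ⊂ f '' Z} => Order.succ (M.wf.rank C.1))
        ⟨B', hB'Z⟩

theorem exists_omap_image_wfRank_eq {W₁ W₂ : M.mu} (h : M.wf.rank W₁ = M.wf.rank W₂)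
    {Z : M.mu} (hZ : (Z : Set Ordinal) ⊆ W₁) :
    ∃ Z' : M.mu, (Z' : Set Ordinal) = omap W₁ W₂ '' Z ∧ M.wf.rank Z' = M.wf.rank Z := by
  have hot := ot_eq_of_wfRank_eq h
  obtain rfl | hne := eq_or_ne Z W₁
  · exact ⟨W₂, (omap_image hot).symm, h.symm⟩
  · exact exists_image_wfRank_eq (strictMonoOn_omap hot).injOn (M.homog W₁ W₂ h).2 Z
      (hZ.ssubset_of_ne (Subtype.coe_ne_coe.2 hne))

/-- By `omap_eq_self`, this says that `f_{XY}` is the identity on `X ∩ Y` for `X, Y ⊆ W`. -/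
def SegmentCoherent (W : M.mu) : Prop :=
  ∀ X Y : M.mu, (X : Set Ordinal) ⊆ W → (Y : Set Ordinal) ⊆ W → M.wf.rank X = M.wf.rank Y →
    ∀ a ∈ (X : Set Ordinal) ∩ Y, ot (X ∩ Iio a) = ot (Y ∩ Iio a)

theorem ot_inter_Iio_eq_of_isStar {W₁ W₂ W : M.mu} (hrk : M.wf.rank W₁ = M.wf.rank W₂)
    (hs : IsStar W₁ W₂ W) (hW₂ : (W₂ : Set Ordinal) ⊂ W) (ih : SegmentCoherent W₂)
    {X Y : M.mu} (hX : (X : Set Ordinal) ⊆ W₁) (hY : (Y : Set Ordinal) ⊆ W₂)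
    (h : M.wf.rank X = M.wf.rank Y) {a : Ordinal} (ha : a ∈ (X : Set Ordinal) ∩ Y) :
    ot (X ∩ Iio a) = ot (Y ∩ Iio a) := by
  have hot := ot_eq_of_wfRank_eq hrk
  have hmono := strictMonoOn_omap hot
  have haW : a ∈ (W₁ : Set Ordinal) ∩ W₂ := ⟨hX ha.1, hY ha.2⟩
  -- `W₁ ∩ W₂` is an initial segment of both `W₁` and `W₂`, so `f_{W₂W₁}` fixes it pointwise.
  have hfix : omap W₁ W₂ a = a :=
    omap_eq_self hot haW.1 haW.2 (by rw [hs.inter_Iio_eq (hs.diff_nonempty hW₂) haW])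
  obtain ⟨X', hX', hrkX'⟩ := exists_omap_image_wfRank_eq hrk hX
  have hX'W₂ : (X' : Set Ordinal) ⊆ W₂ := by
    rw [hX']
    exact (image_mono hX).trans (omap_image hot).le
  have haX' : a ∈ (X' : Set Ordinal) := hX' ▸ ⟨a, ha.1, hfix⟩
  have hseg : omap W₁ W₂ '' (X ∩ Iio a) = (X' : Set Ordinal) ∩ Iio a := by
    rw [hX']
    exact hmono.image_inter_Iio_of_eq_self hX haW.1 hfix
  calc ot (X ∩ Iio a) = ot ((X' : Set Ordinal) ∩ Iio a) := by
        rw [← hseg, ot_image (hmono.mono (inter_subset_left.trans hX))]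
    _ = ot (Y ∩ Iio a) := ih X' Y hX'W₂ hY (hrkX'.trans h) a ⟨haX', ha.2⟩

theorem subset_or_subset_of_ssubset {W W₁ W₂ Z : M.mu}
    (hsub : {Z | Z ∈ M.mu ∧ Z ⊂ (W : Set Ordinal)} =
      {Z | Z ∈ M.mu ∧ Z ⊂ (W₁ : Set Ordinal)} ∪ {Z | Z ∈ M.mu ∧ Z ⊂ (W₂ : Set Ordinal)} ∪
        {(W₁ : Set Ordinal), (W₂ : Set Ordinal)})
    (hZ : (Z : Set Ordinal) ⊂ W) : (Z : Set Ordinal) ⊆ W₁ ∨ (Z : Set Ordinal) ⊆ W₂ := by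
  have hmem : (Z : Set Ordinal) ∈ {Z | Z ∈ M.mu ∧ Z ⊂ (W : Set Ordinal)} := ⟨Z.2, hZ⟩
  rw [hsub] at hmem
  rcases hmem with (⟨-, h⟩ | ⟨-, h⟩) | h | h
  exacts [Or.inl h.subset, Or.inr h.subset, Or.inl h.le, Or.inr (eq_of_mem_singleton h).le]

theorem segmentCoherent (W : M.mu) : SegmentCoherent W := by
  induction W using WellFounded.induction M.wf with
  | _ W IH =>
    intro X Y hX hY h a ha
    obtain rfl | hXY := eq_or_ne X Y
    · rfl
    have hXW : (X : Set Ordinal) ⊂ W := hX.ssubset_of_ne fun hXW =>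
      hXY (eq_of_subset_of_wfRank_eq (hY.trans hXW.ge) h.symm).symm
    have hYW : (Y : Set Ordinal) ⊂ W := hY.ssubset_of_ne fun hYW =>
      hXY (eq_of_subset_of_wfRank_eq (hX.trans hYW.ge) h)
    rcases M.locAlmostDirected W with hdir | ⟨W₁, W₂, hrk, hs, hsub⟩
    · obtain ⟨Z, hZ, hZW, hXZ, hYZ⟩ := hdir X X.2 Y Y.2 hXW hYW
      exact IH ⟨Z, hZ⟩ hZW X Y hXZ hYZ h a ha
    have hW₁ : (W₁ : Set Ordinal) ⊂ W := (hsub.ge (Or.inr (Or.inl rfl))).2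
    have hW₂ : (W₂ : Set Ordinal) ⊂ W := (hsub.ge (Or.inr (Or.inr rfl))).2
    rcases subset_or_subset_of_ssubset hsub hXW with hX₁ | hX₂ <;>
      rcases subset_or_subset_of_ssubset hsub hYW with hY₁ | hY₂
    · exact IH W₁ hW₁ X Y hX₁ hY₁ h a ha
    · exact ot_inter_Iio_eq_of_isStar hrk hs hW₂ (IH W₂ hW₂) hX₁ hY₂ h ha
    · exact (ot_inter_Iio_eq_of_isStar hrk hs hW₂ (IH W₂ hW₂) hY₁ hX₂ h.symm ⟨ha.2, ha.1⟩).symm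
    · exact IH W₂ hW₂ X Y hX₂ hY₂ h a ha

end TwoCardinal

theorem omap_id_on_inter_general (κ : Cardinal) (M : TwoCardinal κ)
    (X Y : M.mu) (hrk : M.rank X = M.rank Y) (a : Ordinal)
    (ha : a ∈ (X : Set Ordinal) ∩ (Y : Set Ordinal)) :
    omap (Y : Set Ordinal) (X : Set Ordinal) a = a := by
  have hwrk := TwoCardinal.wfRank_eq_of_rank_eq hrk
  obtain ⟨W, hW, hXW, hYW⟩ := M.directed X X.2 Y Y.2
  have hseg := TwoCardinal.segmentCoherent ⟨W, hW⟩ X Y hXW hYW hwrk a ha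
  exact omap_eq_self (TwoCardinal.ot_eq_of_wfRank_eq hwrk).symm ha.2 ha.1 hseg.symm

/-- For `X, Y ∈ μ` of the same rank, the unique order-preserving bijection `f_{XY} : Y → X`
is the identity on `X ∩ Y`. -/
theorem omap_id_on_inter (κ : Cardinal) (hκ : κ.IsRegular) (M : TwoCardinal κ)
    (X Y : M.mu) (hrk : M.rank X = M.rank Y) (a : Ordinal)
    (ha : a ∈ (X : Set Ordinal) ∩ (Y : Set Ordinal)) :
    omap (Y : Set Ordinal) (X : Set Ordinal) a = a :=
  omap_id_on_inter_general κ M X Y hrk a ha
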